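/- Let N ≥ 1, B ≥ 0, and let offsets o : Fin B → Fin N. For each particle i, the Megopolis ancestor k(i) after B iterations is determined by comparisons only against particles (i + o b) mod N for b < B, together with i itself, so k(i) ∈ {i} ∪ {(i + o b) mod N : b < B}; consequently, for each particle t ∈ Fin N, the number of particles i with k(i) = t is at most B + 1. -/

import Mathlib

theorem stmt_9 (N B : ℕ) (hN : 1 ≤ N) (o : Fin B → Fin N)
    (k : Fin N → Fin N)
    (hk : ∀ i, k i = i ∨ ∃ b : Fin B, k i = i + o b) :
    ∀ t : Fin N, (Finset.univ.filter (fun i => k i = t)).card ≤ B + 1 := by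
  haveI : NeZero N := ⟨by omega⟩
  intro t
  have hsub : (Finset.univ.filter (fun i => k i = t)) ⊆
      insert t (Finset.image (fun b : Fin B => t - o b) Finset.univ) := by
    intro i hi
    simp only [Finset.mem_filter, Finset.mem_univ, true_and] at hi
    rcases hk i with h | ⟨b, h⟩
    · simp [← hi, h]
    · have : i = t - o b := by
        rw [← hi, h]; exact (add_sub_cancel_right i (o b)).symm
      simp only [Finset.mem_insert, Finset.mem_image, Finset.mem_univ, true_and]
      exact Or.inr ⟨b, this.symm⟩
  calc (Finset.univ.filter (fun i => k i = t)).card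
      ≤ (insert t (Finset.image (fun b : Fin B => t - o b) Finset.univ)).card :=
        Finset.card_le_card hsub
    _ ≤ (Finset.image (fun b : Fin B => t - o b) Finset.univ).card + 1 :=
        Finset.card_insert_le _ _
    _ ≤ B + 1 := by
        have := Finset.card_image_le (f := fun b : Fin B => t - o b) (s := Finset.univ)
        simpa using Nat.add_le_add_right (by simpa using this) 1
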